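/- If G is a connected subcubic graph of order n, then γ*_{e,f}(G) ≥ (1/6)(√(2n + 49/36) + 7/6). -/

import Mathlib

open SimpleGraph Finset

variable {V : Type*}

/-- `(1/2)^(d-1)` for an extended natural `d`, with value `0` at `∞`. -/
noncomputable def halfPow (d : ℕ∞) : ℝ :=
  if d = ⊤ then 0 else 2 * (1 / 2 : ℝ) ^ d.toNat

/-- `(1/2)^(dist_G(u,v)-1)` using the ordinary graph distance. -/
noncomputable def expw (G : SimpleGraph V) (u v : V) : ℝ :=
  2 * (1 / 2 : ℝ) ^ G.dist u v

/-- The modified distance `dist_{(G,D)}(u,v)`: minimum length of a path from `u` to `v`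
whose only vertex in `D` is the endvertex `v` (`∞` if no such path exists). -/
noncomputable def mdist (G : SimpleGraph V) (D : Finset V) (u v : V) : ℕ∞ :=
  sInf ((fun p : G.Walk u v => (p.length : ℕ∞)) ''
    {p | p.IsPath ∧ v ∈ D ∧ ∀ w ∈ p.support, w ∈ D → w = v})

/-- `w_{(G,D)}(u)`. -/
noncomputable def wblock (G : SimpleGraph V) (D : Finset V) (u : V) : ℝ :=
  ∑ v ∈ D, halfPow (mdist G D u v)

/-- `w*_{(G,D)}(u)`. -/
noncomputable def wstar (G : SimpleGraph V) (D : Finset V) (u : V) : ℝ :=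
  ∑ v ∈ D, expw G u v

def IsExpDomSet (G : SimpleGraph V) (D : Finset V) : Prop :=
  ∀ u : V, 1 ≤ wblock G D u

def IsPorousExpDomSet (G : SimpleGraph V) (D : Finset V) : Prop :=
  ∀ u : V, 1 ≤ wstar G D u

def IsDomSet (G : SimpleGraph V) (D : Finset V) : Prop :=
  ∀ v : V, v ∉ D → ∃ u ∈ D, G.Adj u v

/-- The exponential domination number `γ_e(G)`. -/
noncomputable def gammaE (G : SimpleGraph V) [Fintype V] : ℕ :=
  sInf {k | ∃ D : Finset V, IsExpDomSet G D ∧ D.card = k}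

/-- The porous exponential domination number `γ*_e(G)`. -/
noncomputable def gammaEStar (G : SimpleGraph V) [Fintype V] : ℕ :=
  sInf {k | ∃ D : Finset V, IsPorousExpDomSet G D ∧ D.card = k}

/-- The domination number `γ(G)`. -/
noncomputable def gammaDom (G : SimpleGraph V) [Fintype V] : ℕ :=
  sInf {k | ∃ D : Finset V, IsDomSet G D ∧ D.card = k}

/-- Feasibility for the LP relaxation of porous exponential domination. -/
def FracFeasible (G : SimpleGraph V) [Fintype V] (x : V → ℝ) : Prop :=
  (∀ u, 0 ≤ x u) ∧ ∀ v : V, 1 ≤ ∑ u : V, expw G u v * x u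

/-- The fractional porous exponential domination number `γ*_{e,f}(G)`. -/
noncomputable def gammaEF (G : SimpleGraph V) [Fintype V] : ℝ :=
  sInf {s | ∃ x : V → ℝ, FracFeasible G x ∧ s = ∑ u : V, x u}

/-- A graph is subcubic if all degrees are at most `3`. -/
def Subcubic (G : SimpleGraph V) [Fintype V] [DecidableRel G.Adj] : Prop :=
  ∀ v : V, G.degree v ≤ 3


/-!
Both bounds are weak LP duality: summing the constraints of a feasible `x` over vertices
`v₁, …, vₘ` gives `m ≤ C ∑ x` as soon as `∑ⱼ (1/2)^(dist(u, vⱼ) - 1) ≤ C` for every `u`.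
Over all vertices `C = 2 + 3d`, since in a subcubic graph the sphere of radius `k ≥ 1` has at most
`3 · 2^(k-1)` vertices. Over a diametral path, with its two ends counted twice, `C = 6`: the distance
from `u` to the `i`-th path vertex is at least `dist(u, start) - i` and `dist(u, end) - (d - i)`,
so the weights decay geometrically away from the point of the path closest to `u`.
Eliminating `d` from `d + 3 ≤ 6 γ` and `n ≤ (2 + 3d) γ` gives the square-root bound.
-/

-- `f i` stands for the distance from a vertex to the `i`-th vertex of a geodesic of length `d`
-- whose ends are at distance `a` and `b` from it.
lemma sum_range_half_pow_add_le_three {d a b : ℕ} {f : ℕ → ℕ} (hab : d ≤ a + b)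
    (ha : ∀ i ≤ d, a ≤ f i + i) (hb : ∀ i ≤ d, b + i ≤ f i + d) :
    ∑ i ∈ range (d + 1), (1 / 2 : ℝ) ^ f i + (1 / 2) ^ a + (1 / 2) ^ b ≤ 3 := by
  have hanti : ∀ {m n : ℕ}, m ≤ n → (1 / 2 : ℝ) ^ n ≤ (1 / 2) ^ m :=
    fun h ↦ pow_le_pow_of_le_one (by norm_num) (by norm_num) h
  induction d generalizing a b f with
  | zero =>
    simp only [zero_add, sum_range_one]
    linarith [hanti (Nat.zero_le (f 0)), hanti (Nat.zero_le a), hanti (Nat.zero_le b)]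
  | succ d ih =>
    -- peel off the end of the geodesic that is farther from the vertex
    rcases le_or_gt b a with hba | hab_lt
    · obtain ⟨a, rfl⟩ := Nat.exists_eq_add_one_of_ne_zero (by omega : a ≠ 0)
      have hrest := ih (a := a) (b := b) (f := fun i ↦ f (i + 1)) (by omega)
        (fun i hi ↦ by have := ha (i + 1) (by omega); omega)
        (fun i hi ↦ by have := hb (i + 1) (by omega); omega)
      have hfirst := hanti (by simpa using ha 0 (by omega) : a + 1 ≤ f 0)
      rw [sum_range_succ']
      linarith [pow_succ (1 / 2 : ℝ) a]
    · obtain ⟨b, rfl⟩ := Nat.exists_eq_add_one_of_ne_zero (by omega : b ≠ 0)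
      have hrest := ih (a := a) (b := b) (f := f) (by omega)
        (fun i hi ↦ ha i (by omega)) (fun i hi ↦ by have := hb i (by omega); omega)
      have hlast := hanti (by have := hb (d + 1) le_rfl; omega : b + 1 ≤ f (d + 1))
      rw [sum_range_succ]
      linarith [pow_succ (1 / 2 : ℝ) b]

namespace SimpleGraph

variable {G : SimpleGraph V} {u v : V}

lemma Walk.dist_getVert_le (p : G.Walk u v) (i : ℕ) : G.dist u (p.getVert i) ≤ i :=
  (dist_le (p.take i)).trans (by simp [Walk.take_length])

lemma Walk.dist_getVert_le_length_sub (p : G.Walk u v) (i : ℕ) :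
    G.dist (p.getVert i) v ≤ p.length - i :=
  (dist_le (p.drop i)).trans_eq (p.drop_length i)

lemma exists_adj_dist_eq_of_dist_eq_succ {k : ℕ} (h : G.dist u v = k + 1) :
    ∃ w, G.Adj w v ∧ G.dist u w = k := by
  obtain ⟨p, hp⟩ :=
    (Reachable.of_dist_ne_zero (by omega : G.dist u v ≠ 0)).exists_walk_length_eq_dist
  have hadj : G.Adj (p.getVert k) v := by
    have hlen : k + 1 = p.length := by omega
    simpa [hlen, p.getVert_length] using p.adj_getVert_succ (i := k) (by omega)
  refine ⟨p.getVert k, hadj, le_antisymm (p.dist_getVert_le k) ?_⟩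
  have := hadj.reachable.dist_triangle_right u
  have := p.dist_getVert_le_length_sub k
  omega

lemma card_dist_eq_succ_le [Fintype V] [DecidableRel G.Adj] {Δ : ℕ}
    (hΔ : ∀ v, G.degree v ≤ Δ) (u : V) (k : ℕ) : #{v | G.dist u v = k + 1} ≤ Δ * (Δ - 1) ^ k := by
  induction k with
  | zero =>
    calc #{v | G.dist u v = 0 + 1} ≤ #(G.neighborFinset u) :=
          card_le_card fun v hv ↦ by simpa using hv
      _ ≤ Δ * (Δ - 1) ^ 0 := by simpa using hΔ u
  | succ k ih =>
    classical
    have hcover : ({v | G.dist u v = k + 1 + 1} : Finset V) ⊆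
        ({w | G.dist u w = k + 1} : Finset V).biUnion
          fun w ↦ {v ∈ G.neighborFinset w | G.dist u v = k + 1 + 1} := by
      intro v hv
      obtain ⟨w, hwv, hw⟩ := exists_adj_dist_eq_of_dist_eq_succ (mem_filter.mp hv).2
      simp only [mem_biUnion, mem_filter, mem_univ, true_and, mem_neighborFinset]
      exact ⟨w, hw, hwv, (mem_filter.mp hv).2⟩
    -- a vertex `w` at distance `k + 1` spends one of its edges on a vertex at distance `k`
    have hfar : ∀ w ∈ ({w | G.dist u w = k + 1} : Finset V),
        #{v ∈ G.neighborFinset w | G.dist u v = k + 1 + 1} ≤ Δ - 1 := by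
      intro w hw
      obtain ⟨w₀, hw₀w, hw₀⟩ := exists_adj_dist_eq_of_dist_eq_succ (mem_filter.mp hw).2
      have hsub : {v ∈ G.neighborFinset w | G.dist u v = k + 1 + 1} ⊆
          (G.neighborFinset w).erase w₀ := fun v hv ↦ by
          simp only [mem_filter] at hv
          exact mem_erase.mpr ⟨by rintro rfl; omega, hv.1⟩
      calc _ ≤ #((G.neighborFinset w).erase w₀) := card_le_card hsub
        _ = G.degree w - 1 := by
          rw [card_erase_of_mem (by simpa using hw₀w.symm), card_neighborFinset_eq_degree]
        _ ≤ Δ - 1 := Nat.sub_le_sub_right (hΔ w) 1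
    calc _ ≤ _ := card_le_card hcover
      _ ≤ _ := card_biUnion_le
      _ ≤ #{w | G.dist u w = k + 1} * (Δ - 1) := sum_le_card_nsmul _ _ _ hfar
      _ ≤ Δ * (Δ - 1) ^ k * (Δ - 1) := Nat.mul_le_mul_right _ ih
      _ = Δ * (Δ - 1) ^ (k + 1) := by ring

lemma Connected.sum_expw_geodesic_le (hc : G.Connected) (p : G.Walk u v)
    (hp : p.length = G.dist u v) (w : V) :
    ∑ i ∈ range (p.length + 1), expw G w (p.getVert i) + expw G w u + expw G w v ≤ 6 := by
  have hpath := sum_range_half_pow_add_le_three (d := p.length) (a := G.dist w u)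
    (b := G.dist w v) (f := fun i ↦ G.dist w (p.getVert i))
    (by
      have := hc.dist_triangle (u := u) (v := w) (w := v)
      rw [dist_comm (u := u) (v := w)] at this
      omega)
    (fun i _ ↦ by
      have htri := hc.dist_triangle (u := w) (v := p.getVert i) (w := u)
      rw [dist_comm (u := p.getVert i)] at htri
      have := p.dist_getVert_le i
      omega)
    (fun i _ ↦ by
      have := hc.dist_triangle (u := w) (v := p.getVert i) (w := v)
      have := p.dist_getVert_le_length_sub i
      omega)
  simp only [expw, ← mul_sum]
  linarith

lemma Connected.sum_expw_le [Fintype V] [DecidableRel G.Adj] (hc : G.Connected)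
    (hsub : Subcubic G) (u : V) {d : ℕ} (hd : ∀ v, G.dist u v ≤ d) :
    ∑ v, expw G u v ≤ 2 + 3 * d := by
  classical
  rw [← sum_fiberwise_of_maps_to (s := univ) (t := range (d + 1)) (g := G.dist u)
    (fun v _ ↦ mem_range.mpr (Nat.lt_succ_of_le (hd v))), sum_range_succ']
  have hsphere : ∀ k, ∑ v with G.dist u v = k, expw G u v =
      #{v | G.dist u v = k} * (2 * (1 / 2) ^ k) := fun k ↦ by
    rw [sum_congr rfl fun v hv ↦ by rw [expw, (mem_filter.mp hv).2], sum_const, nsmul_eq_mul]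
  have hcentre : #{v | G.dist u v = 0} = 1 := by
    rw [card_eq_one]
    exact ⟨u, by ext v; simp [hc.dist_eq_zero_iff, eq_comm]⟩
  have hshell : ∀ k, ∑ v with G.dist u v = k + 1, expw G u v ≤ 3 := by
    intro k
    have hcard : (#{v | G.dist u v = k + 1} : ℝ) ≤ 3 * 2 ^ k := by
      exact_mod_cast card_dist_eq_succ_le hsub u k
    rw [hsphere]
    calc _ ≤ 3 * 2 ^ k * (2 * (1 / 2 : ℝ) ^ (k + 1)) := by gcongr
      _ = 3 := by rw [one_div, inv_pow]; field_simp; ring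
  calc _ ≤ ∑ _k ∈ range d, (3 : ℝ) + 2 := by
        gcongr with k
        · exact hshell k
        · rw [hsphere, hcentre]; norm_num
    _ = 2 + 3 * d := by rw [sum_const, card_range, nsmul_eq_mul]; ring

end SimpleGraph

namespace FracFeasible

variable [Fintype V] {G : SimpleGraph V} {x : V → ℝ}

lemma card_le_sum_mul (hx : FracFeasible G x) {ι : Type*} (s : Finset ι) (w : ι → V) :
    (#s : ℝ) ≤ ∑ u, (∑ i ∈ s, expw G u (w i)) * x u := by
  calc (#s : ℝ) = ∑ _i ∈ s, (1 : ℝ) := by simp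
    _ ≤ ∑ i ∈ s, ∑ u, expw G u (w i) * x u := sum_le_sum fun i _ ↦ hx.2 (w i)
    _ = _ := by simp only [sum_mul]; exact sum_comm

lemma diam_add_three_le (hx : FracFeasible G x) (hc : G.Connected) :
    (G.diam : ℝ) + 3 ≤ 6 * ∑ u, x u := by
  have := hc.nonempty
  obtain ⟨u₀, v₀, hdiam⟩ := G.exists_dist_eq_diam
  obtain ⟨p, hp⟩ := hc.exists_walk_length_eq_dist u₀ v₀
  calc (G.diam : ℝ) + 3 = (#(range (p.length + 1)) : ℝ) + 1 + 1 := by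
        rw [card_range, hp, hdiam]; push_cast; ring
    _ ≤ ∑ u, (∑ i ∈ range (p.length + 1), expw G u (p.getVert i)) * x u
        + ∑ u, expw G u u₀ * x u + ∑ u, expw G u v₀ * x u := by
      gcongr
      exacts [hx.card_le_sum_mul _ p.getVert, hx.2 u₀, hx.2 v₀]
    _ = ∑ u, (∑ i ∈ range (p.length + 1), expw G u (p.getVert i)
        + expw G u u₀ + expw G u v₀) * x u := by
      simp only [add_mul, sum_add_distrib]
    _ ≤ ∑ u, 6 * x u := sum_le_sum fun u _ ↦
      mul_le_mul_of_nonneg_right (hc.sum_expw_geodesic_le p hp u) (hx.1 u)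
    _ = 6 * ∑ u, x u := (mul_sum _ _ _).symm

lemma card_le [DecidableRel G.Adj] (hx : FracFeasible G x) (hc : G.Connected)
    (hsub : Subcubic G) : (Fintype.card V : ℝ) ≤ (2 + 3 * G.diam) * ∑ u, x u := by
  have := hc.nonempty
  have hdiam : ∀ u v, G.dist u v ≤ G.diam :=
    fun _ _ ↦ dist_le_diam (connected_iff_ediam_ne_top.mp hc)
  calc (Fintype.card V : ℝ) = #(univ : Finset V) := by rw [card_univ]
    _ ≤ ∑ u, (∑ v, expw G u v) * x u := hx.card_le_sum_mul univ id
    _ ≤ ∑ u, (2 + 3 * G.diam) * x u := sum_le_sum fun u _ ↦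
      mul_le_mul_of_nonneg_right (hc.sum_expw_le hsub u (hdiam u)) (hx.1 u)
    _ = (2 + 3 * G.diam) * ∑ u, x u := (mul_sum _ _ _).symm

end FracFeasible

lemma fracFeasible_one (G : SimpleGraph V) [Fintype V] : FracFeasible G 1 := by
  refine ⟨fun _ ↦ zero_le_one, fun v ↦ ?_⟩
  calc (1 : ℝ) ≤ expw G v v * 1 := by simp [expw]
    _ ≤ ∑ u, expw G u v * (1 : V → ℝ) u :=
      single_le_sum (f := fun u ↦ expw G u v * 1) (fun u _ ↦ by simp [expw]) (mem_univ v)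

lemma le_gammaEF {G : SimpleGraph V} [Fintype V] {c : ℝ}
    (h : ∀ x, FracFeasible G x → c ≤ ∑ u, x u) : c ≤ gammaEF G :=
  le_csInf ⟨_, 1, fracFeasible_one G, rfl⟩ fun _ ⟨x, hx, hs⟩ ↦ hs ▸ h x hx

lemma sqrt_bound_of_le_of_le (n d : ℕ) {S : ℝ} (hd : (d : ℝ) + 3 ≤ 6 * S)
    (hn : (n : ℝ) ≤ (2 + 3 * d) * S) :
    1 / 6 * (√(2 * n + 49 / 36) + 7 / 6) ≤ S := by
  have hS : 1 / 2 ≤ S := by linarith [(d.cast_nonneg : (0 : ℝ) ≤ d)]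
  have hsq : 2 * (n : ℝ) + 49 / 36 ≤ (6 * S - 7 / 6) ^ 2 := by nlinarith
  linarith [(Real.sqrt_le_left (by linarith)).mpr hsq]

/-- If `G` is a connected subcubic graph of order `n`, then
`γ*_{e,f}(G) ≥ (1/6)(√(2n + 49/36) + 7/6)`. -/
theorem stmt_14 {V : Type*} [Fintype V] (G : SimpleGraph V) [DecidableRel G.Adj]
    (hc : G.Connected) (hsub : Subcubic G) :
    (1 / 6 : ℝ) * (Real.sqrt (2 * (Fintype.card V : ℝ) + 49 / 36) + 7 / 6) ≤ gammaEF G :=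
  le_gammaEF fun _ hx ↦
    sqrt_bound_of_le_of_le _ G.diam (hx.diam_add_three_le hc) (hx.card_le hc hsub)
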